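/- Unique minimizer of the maximum-distance Γ-limit: the functional μ ↦ (1/2)·esssup_{x∈Ω} 1/f(x) over probability measures μ on Ω̄ with Lebesgue density f has a unique minimizer, namely the normalized Lebesgue measure dx/|Ω|, with minimal value |Ω|/2. -/

import Mathlib

open MeasureTheory Set Filter Topology
open scoped ENNReal NNReal

noncomputable section

abbrev E2 := EuclideanSpace ℝ (Fin 2)

/-- The maximum-distance `Γ`-limit functional
`μ ↦ (1/2)·esssup_{x∈Ω} 1/f(x)`, where `f` is the Lebesgue density of (the
absolutely continuous part of) `μ` (with `1/0 = ∞`, so the value is `∞` if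
`f` vanishes on a set of positive measure). -/
def maxDistLimit (Ω : Set E2) (μ : Measure E2) : ℝ≥0∞ :=
  essSup (fun x => (2 * μ.rnDeriv volume x)⁻¹) (volume.restrict Ω)

/-!
A density bounded below by `c` on `Ω` forces `μ ≥ c • volume|_Ω`, hence `c · |Ω| ≤ 1`; and
`maxDistLimit Ω μ ≤ m` is exactly such a bound with `c = (2m)⁻¹`, giving `m ≥ |Ω|/2`. In the
equality case `c · |Ω| = 1`, so `μ` dominates the probability measure `dx/|Ω|` and must coincide
with it.
-/

lemma ENNReal.inv_two_mul_le_comm {a b : ℝ≥0∞} : (2 * a)⁻¹ ≤ b ↔ (2 * b)⁻¹ ≤ a := by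
  rw [ENNReal.inv_le_iff_inv_le, ENNReal.mul_inv (by simp) (by simp),
    ENNReal.inv_mul_le_iff (by simp) (by simp)]

namespace MeasureTheory.Measure

variable {α : Type*} [MeasurableSpace α] {μ ν : Measure α} {s : Set α} {c : ℝ≥0∞}

lemma smul_restrict_eq_withDensity_indicator (hs : MeasurableSet s) :
    c • ν.restrict s = ν.withDensity (s.indicator fun _ => c) := by
  rw [withDensity_indicator hs, withDensity_const]

lemma rnDeriv_smul_restrict_ae_eq [SigmaFinite ν] (hs : MeasurableSet s) :
    (c • ν.restrict s).rnDeriv ν =ᵐ[ν.restrict s] fun _ => c := by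
  rw [smul_restrict_eq_withDensity_indicator hs]
  filter_upwards [ae_restrict_of_ae (rnDeriv_withDensity ν (measurable_const.indicator hs)),
    ae_restrict_mem hs] with x hx hxs
  rw [hx, indicator_of_mem hxs]

lemma smul_restrict_le_of_ae_le_rnDeriv (hs : MeasurableSet s)
    (h : ∀ᵐ x ∂ν.restrict s, c ≤ μ.rnDeriv ν x) : c • ν.restrict s ≤ μ := by
  have hle : s.indicator (fun _ => c) ≤ᵐ[ν] μ.rnDeriv ν := by
    filter_upwards [(ae_restrict_iff' hs).mp h] with x hx
    by_cases hxs : x ∈ s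
    · simpa [indicator_of_mem hxs] using hx hxs
    · simp [indicator_of_notMem hxs]
  calc c • ν.restrict s = ν.withDensity (s.indicator fun _ => c) :=
        smul_restrict_eq_withDensity_indicator hs
    _ ≤ ν.withDensity (μ.rnDeriv ν) := withDensity_mono hle
    _ ≤ μ := withDensity_rnDeriv_le μ ν

lemma mul_measure_le_of_ae_le_rnDeriv (hs : MeasurableSet s)
    (h : ∀ᵐ x ∂ν.restrict s, c ≤ μ.rnDeriv ν x) : c * ν s ≤ μ s := by
  simpa using smul_restrict_le_of_ae_le_rnDeriv hs h s

lemma eq_smul_restrict_of_ae_le_rnDeriv [IsProbabilityMeasure μ] (hs : MeasurableSet s)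
    (h : ∀ᵐ x ∂ν.restrict s, c ≤ μ.rnDeriv ν x) (hc : c * ν s = 1) :
    μ = c • ν.restrict s := by
  have hle := smul_restrict_le_of_ae_le_rnDeriv hs h
  have := isFiniteMeasure_of_le μ hle
  exact (eq_of_le_of_measure_univ_eq hle (by simp [hc])).symm

end MeasureTheory.Measure

lemma ae_le_rnDeriv_of_maxDistLimit_le {Ω : Set E2} {μ : Measure E2} {m : ℝ≥0∞}
    (h : maxDistLimit Ω μ ≤ m) : ∀ᵐ x ∂volume.restrict Ω, (2 * m)⁻¹ ≤ μ.rnDeriv volume x := by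
  filter_upwards [ENNReal.ae_le_essSup fun x => (2 * μ.rnDeriv volume x)⁻¹] with x hx
  exact ENNReal.inv_two_mul_le_comm.mp (hx.trans h)

lemma maxDistLimit_smul_restrict {Ω : Set E2} (hΩ : MeasurableSet Ω) (hΩ0 : volume Ω ≠ 0)
    (c : ℝ≥0∞) : maxDistLimit Ω (c • volume.restrict Ω) = (2 * c)⁻¹ := by
  have hconst : (fun x => (2 * (c • volume.restrict Ω).rnDeriv volume x)⁻¹)
      =ᵐ[volume.restrict Ω] fun _ => (2 * c)⁻¹ := by
    filter_upwards [Measure.rnDeriv_smul_restrict_ae_eq hΩ] with x hx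
    rw [hx]
  rw [maxDistLimit, essSup_congr_ae hconst, essSup_const _ (by simpa using hΩ0)]

lemma half_measure_le_maxDistLimit {Ω : Set E2} (hΩ : MeasurableSet Ω) (μ : Measure E2)
    [IsProbabilityMeasure μ] : volume Ω / 2 ≤ maxDistLimit Ω μ := by
  have h := (Measure.mul_measure_le_of_ae_le_rnDeriv hΩ
    (ae_le_rnDeriv_of_maxDistLimit_le le_rfl)).trans (prob_le_one (μ := μ))
  rw [← ENNReal.div_eq_inv_mul,
    ENNReal.div_le_iff_le_mul (.inr ENNReal.one_ne_top) (.inr one_ne_zero), one_mul, mul_comm] at h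
  exact ENNReal.div_le_of_le_mul h

/-- Unique minimizer of the maximum-distance `Γ`-limit: over probability measures
on `closure Ω`, the functional `μ ↦ (1/2)·esssup_Ω 1/f` is uniquely minimized by
the normalized Lebesgue measure on `Ω`, with minimal value `|Ω|/2`. -/
theorem maxDistLimit_min (Ω : Set E2) (hΩo : IsOpen Ω)
    (hΩb : Bornology.IsBounded Ω) (hΩne : Ω.Nonempty)
    (μ₀ : Measure E2) (hμ₀ : μ₀ = (volume Ω)⁻¹ • volume.restrict Ω) :
    maxDistLimit Ω μ₀ = volume Ω / 2 ∧
    (∀ μ : Measure E2, IsProbabilityMeasure μ → μ (closure Ω) = 1 →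
      maxDistLimit Ω μ₀ ≤ maxDistLimit Ω μ) ∧
    (∀ μ : Measure E2, IsProbabilityMeasure μ → μ (closure Ω) = 1 →
      maxDistLimit Ω μ = maxDistLimit Ω μ₀ → μ = μ₀) := by
  have hΩm : MeasurableSet Ω := hΩo.measurableSet
  have hpos : volume Ω ≠ 0 := (hΩo.measure_pos volume hΩne).ne'
  have hfin : volume Ω ≠ ∞ := hΩb.measure_lt_top.ne
  have hval : maxDistLimit Ω μ₀ = volume Ω / 2 := by
    rw [hμ₀, maxDistLimit_smul_restrict hΩm hpos, ENNReal.mul_inv (by simp) (by simp), inv_inv,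
      ENNReal.div_eq_inv_mul]
  refine ⟨hval, fun μ _ _ => hval ▸ half_measure_le_maxDistLimit hΩm μ, fun μ _ _ heq => ?_⟩
  have hdensity : ∀ᵐ x ∂volume.restrict Ω, (volume Ω)⁻¹ ≤ μ.rnDeriv volume x := by
    simpa [heq, hval, ENNReal.mul_div_cancel] using
      ae_le_rnDeriv_of_maxDistLimit_le (le_refl (maxDistLimit Ω μ))
  rw [hμ₀]
  exact Measure.eq_smul_restrict_of_ae_le_rnDeriv hΩm hdensity (ENNReal.inv_mul_cancel hpos hfin)
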